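/- Terminal alignment property: Let G be an npeg and let id denote the identity relation on ℕ. Then |a| ~G id▹a for every terminal a ∈ Σ. -/

import Mathlib

/-- Parsing expressions of an extended PEG (npeg) over non-terminals `N`
and terminals `T`. -/
inductive Expr (N T : Type) : Type where
  | eps : Expr N T
  | term : T → Expr N T
  | nt : N → Expr N T
  | seq : Expr N T → Expr N T → Expr N T
  | choice : Expr N T → Expr N T → Expr N T
  | neg : Expr N T → Expr N T
  | star : Expr N T → Expr N T
  | ind : (ℕ → ℕ → Prop) → Expr N T → Expr N T
  | pos : (ℕ → ℕ → Prop) → Expr N T → Expr N T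
  | aln : Expr N T → Expr N T

/-- An extended PEG: a production function and a start expression. -/
structure Npeg (N T : Type) where
  delta : N → Expr N T
  start : Expr N T

/-- Operation states: rest of input (terminals with their column numbers),
set of indentation baseline candidates, alignment flag. -/
abbrev PState (T : Type) := List (T × ℕ) × Set ℕ × Bool

/-- Image of a set under a binary relation on ℕ. -/
def img (r : ℕ → ℕ → Prop) (Y : Set ℕ) : Set ℕ := {x | ∃ y ∈ Y, r y x}

/-- Inverse relation. -/
def inv (r : ℕ → ℕ → Prop) : ℕ → ℕ → Prop := fun x y => r y x

/-- `Rel⁺(ℕ)`: relations whose image of ℕ is all of ℕ. -/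
def RelPlus (r : ℕ → ℕ → Prop) : Prop := img r Set.univ = Set.univ

/-- The parsing relation `G ⊢ e, t : σ ⇒ o`. -/
inductive Parse {N T : Type} (G : Npeg N T) :
    Expr N T → (ℕ → ℕ → Prop) → PState T → Option (PState T) → Prop where
  | eps {t : ℕ → ℕ → Prop} {σ : PState T} : Parse G .eps t σ (some σ)
  | term_false {t : ℕ → ℕ → Prop} {a : T} {i : ℕ} {w' : List (T × ℕ)} {I : Set ℕ}
      (h : i ∈ img (inv t) I) :
      Parse G (.term a) t ((a, i) :: w', I, false) (some (w', I ∩ img t {i}, false))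
  | term_true {t : ℕ → ℕ → Prop} {a : T} {i : ℕ} {w' : List (T × ℕ)} {I : Set ℕ}
      (h : i ∈ I) :
      Parse G (.term a) t ((a, i) :: w', I, true) (some (w', ({i} : Set ℕ), false))
  | term_fail {t : ℕ → ℕ → Prop} {a : T} {w : List (T × ℕ)} {I : Set ℕ} {b : Bool}
      (h : ¬ ∃ i w', w = (a, i) :: w' ∧
        ((b = false ∧ i ∈ img (inv t) I) ∨ (b = true ∧ i ∈ I))) :
      Parse G (.term a) t (w, I, b) none
  | nt {t σ o} {x : N} (h : Parse G (G.delta x) t σ o) : Parse G (.nt x) t σ o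
  | seq_ok {t σ σ' o p q} (h1 : Parse G p t σ (some σ')) (h2 : Parse G q t σ' o) :
      Parse G (.seq p q) t σ o
  | seq_fail {t σ p q} (h : Parse G p t σ none) : Parse G (.seq p q) t σ none
  | choice_ok {t σ σ' p q} (h : Parse G p t σ (some σ')) :
      Parse G (.choice p q) t σ (some σ')
  | choice_snd {t σ o p q} (h1 : Parse G p t σ none) (h2 : Parse G q t σ o) :
      Parse G (.choice p q) t σ o
  | neg_ok {t σ p} (h : Parse G p t σ none) : Parse G (.neg p) t σ (some σ)
  | neg_fail {t σ σ' p} (h : Parse G p t σ (some σ')) : Parse G (.neg p) t σ none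
  | star_end {t σ p} (h : Parse G p t σ none) : Parse G (.star p) t σ (some σ)
  | star_step {t σ σ' o p} (h1 : Parse G p t σ (some σ'))
      (h2 : Parse G (.star p) t σ' o) : Parse G (.star p) t σ o
  | ind_ok {t r p} {w : List (T × ℕ)} {I : Set ℕ} {b : Bool}
      {w' : List (T × ℕ)} {I' : Set ℕ} {b' : Bool}
      (h : Parse G p t (w, img (inv r) I, b) (some (w', I', b'))) :
      Parse G (.ind r p) t (w, I, b) (some (w', I ∩ img r I', b'))
  | ind_fail {t r p} {w : List (T × ℕ)} {I : Set ℕ} {b : Bool}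
      (h : Parse G p t (w, img (inv r) I, b) none) :
      Parse G (.ind r p) t (w, I, b) none
  | pos {t s σ o p} (h : Parse G p s σ o) : Parse G (.pos s p) t σ o
  | aln_ok {t p} {w : List (T × ℕ)} {I : Set ℕ} {b : Bool}
      {w' : List (T × ℕ)} {I' : Set ℕ} {b' : Bool}
      (h : Parse G p t (w, I, true) (some (w', I', b'))) :
      Parse G (.aln p) t (w, I, b) (some (w', I', b && b'))
  | aln_fail {t p} {w : List (T × ℕ)} {I : Set ℕ} {b : Bool}
      (h : Parse G p t (w, I, true) none) :
      Parse G (.aln p) t (w, I, b) none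

/-- Semantic equivalence of expressions in a grammar `G`. -/
def ExprEquiv {N T : Type} (G : Npeg N T) (p q : Expr N T) : Prop :=
  ∀ t : ℕ → ℕ → Prop, RelPlus t → ∀ (σ : PState T) (o : Option (PState T)),
    Parse G p t σ o ↔ Parse G q t σ o

/- Under the identity token mode a terminal can only be consumed at a column `i ∈ I`, and the
new candidate set `I ∩ {i}` is then `{i}`: exactly what an aligned terminal does in any token
mode. Since a terminal always resets the alignment flag, `|a|` behaves like an aligned `a`. -/

section Terminal

variable {N T : Type}

lemma img_eq_rel (I : Set ℕ) : img (fun x y : ℕ => x = y) I = I := by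
  ext x; simp [img]

lemma inv_eq_rel : inv (fun x y : ℕ => x = y) = fun x y => x = y := by
  funext x y; exact propext eq_comm

open Classical in
/-- Rule (2) as a function of the state. -/
noncomputable def termStep (t : ℕ → ℕ → Prop) (a : T) : PState T → Option (PState T)
  | ((c, i) :: w', I, false) =>
      if c = a ∧ i ∈ img (inv t) I then some (w', I ∩ img t {i}, false) else none
  | ((c, i) :: w', I, true) => if c = a ∧ i ∈ I then some (w', {i}, false) else none
  | ([], _, _) => none

variable {G : Npeg N T} {t : ℕ → ℕ → Prop} {a : T}

lemma parse_term_iff {σ : PState T} {o : Option (PState T)} :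
    Parse G (.term a) t σ o ↔ o = termStep t a σ := by
  constructor
  · intro h
    cases h with
    | term_false hi => simp [termStep, hi]
    | term_true hi => simp [termStep, hi]
    | @term_fail _ _ w I b hno =>
      rcases w with _ | ⟨⟨c, i⟩, w'⟩
      · cases b <;> rfl
      · cases b <;> simp only [termStep] <;> split_ifs with h <;> try rfl
        all_goals obtain ⟨rfl, hi⟩ := h
        all_goals exact absurd ⟨i, w', rfl, by simp [hi]⟩ hno
  · rintro rfl
    obtain ⟨_ | ⟨⟨c, i⟩, w'⟩, I, _ | _⟩ := σ
    · exact .term_fail (by simp)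
    · exact .term_fail (by simp)
    all_goals
      simp only [termStep]
      split_ifs with h
      · obtain ⟨rfl, hi⟩ := h
        first | exact .term_false hi | exact .term_true hi
      · refine .term_fail ?_
        rintro ⟨j, w'', heq, hc⟩
        simp only [List.cons.injEq, Prod.mk.injEq] at heq
        obtain ⟨⟨rfl, rfl⟩, rfl⟩ := heq
        simp_all

lemma termStep_flag {σ σ' : PState T} (h : termStep t a σ = some σ') : σ'.2.2 = false := by
  obtain ⟨_ | ⟨⟨c, i⟩, w'⟩, I, _ | _⟩ := σ <;> simp only [termStep] at h <;>
    (try split_ifs at h) <;> cases h <;> rfl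

lemma termStep_eq_rel (w : List (T × ℕ)) (I : Set ℕ) (b : Bool) :
    termStep (fun x y => x = y) a (w, I, b) = termStep t a (w, I, true) := by
  rcases w with _ | ⟨⟨c, i⟩, w'⟩
  · cases b <;> rfl
  cases b
  · by_cases h : c = a ∧ i ∈ I <;> simp [termStep, inv_eq_rel, img_eq_rel, h]
  · rfl

lemma parse_aln_term_iff {w : List (T × ℕ)} {I : Set ℕ} {b : Bool} {o : Option (PState T)} :
    Parse G (.aln (.term a)) t (w, I, b) o ↔ o = termStep t a (w, I, true) := by
  constructor
  · intro h
    cases h with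
    | @aln_ok _ _ _ _ _ w' I' b' h =>
      rw [parse_term_iff] at h
      obtain rfl : b' = false := termStep_flag h.symm
      simpa using h
    | aln_fail h => exact parse_term_iff.mp h
  · rintro rfl
    cases hstep : termStep t a (w, I, true) with
    | none => exact .aln_fail (parse_term_iff.mpr hstep.symm)
    | some σ' =>
      obtain ⟨w', I', b'⟩ := σ'
      obtain rfl : b' = false := termStep_flag hstep
      simpa using Parse.aln_ok (b := b) (parse_term_iff.mpr hstep.symm)

lemma parse_pos_iff {s : ℕ → ℕ → Prop} {p : Expr N T} {σ : PState T} {o : Option (PState T)} :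
    Parse G (.pos s p) t σ o ↔ Parse G p s σ o :=
  ⟨fun h => by cases h; assumption, .pos⟩

end Terminal

theorem aln_term_general {N T : Type} (G : Npeg N T) (a : T) :
    ExprEquiv G (.aln (.term a)) (.pos (fun x y => x = y) (.term a)) := by
  rintro t - ⟨w, I, b⟩ o
  rw [parse_aln_term_iff, parse_pos_iff, parse_term_iff, termStep_eq_rel]

/-- Terminal alignment property: `|a| ~G id▹a`. -/
theorem aln_term {N T : Type} [Fintype N] [Fintype T] (G : Npeg N T) (a : T) :
    ExprEquiv G (.aln (.term a)) (.pos (fun x y => x = y) (.term a)) :=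
  aln_term_general G a
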